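/- Let n ≥ 2, let H_1, ..., H_k be finite simple graphs with H_1 a single edge, and let β = (β_1, ..., β_k) ∈ ℝ^k with β_2, ..., β_k ≥ 0 (β_1 arbitrary). Then the exponential random graph measure μ_{n;β} satisfies the GKS inequality: for all subsets A, B ⊆ E_n, E_{n;β}(x_A x_B) ≥ E_{n;β}(x_A) · E_{n;β}(x_B), where x_C := Π_{i∈C} x_i for C ⊆ E_n (with x_∅ = 1). -/

import Mathlib

open Finset

/-- Edges of the complete graph on `n` labeled vertices. -/
def Edge (n : ℕ) : Type := {e : Sym2 (Fin n) // ¬ e.IsDiag}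

instance (n : ℕ) : Fintype (Edge n) := by unfold Edge; infer_instance
instance (n : ℕ) : DecidableEq (Edge n) := by unfold Edge; infer_instance

/-- The simple graph on `Fin n` associated with a configuration `x ∈ {0,1}^{E_n}`. -/
def graphOf {n : ℕ} (x : Edge n → Fin 2) : SimpleGraph (Fin n) where
  Adj a b := ∃ hab : a ≠ b, x ⟨s(a, b), fun hd => hab (Sym2.mk_isDiag_iff.mp hd)⟩ = 1
  symm := by
    constructor
    rintro a b ⟨hab, hx⟩
    refine ⟨hab.symm, ?_⟩
    have he : (⟨s(b, a), fun hd => hab.symm (Sym2.mk_isDiag_iff.mp hd)⟩ : Edge n)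
        = ⟨s(a, b), fun hd => hab (Sym2.mk_isDiag_iff.mp hd)⟩ :=
      Subtype.ext Sym2.eq_swap
    rw [he]; exact hx
  loopless := by constructor; rintro a ⟨hab, _⟩; exact hab rfl

/-- The number `hom(H, G)` of edge-preserving vertex maps from `H` to `G`. -/
noncomputable def homCount {V W : Type*} (H : SimpleGraph W) (G : SimpleGraph V) : ℕ :=
  Nat.card {f : W → V // ∀ a b, H.Adj a b → G.Adj (f a) (f b)}

/-- The homomorphism density `t(H, G) = hom(H, G) / n^{|V(H)|}` for a graph `G`
on `n` vertices and `H` on `m` vertices. -/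
noncomputable def homDensity {m n : ℕ} (H : SimpleGraph (Fin m)) (G : SimpleGraph (Fin n)) : ℝ :=
  (homCount H G : ℝ) / (n : ℝ) ^ m

/-- The Hamiltonian of a general exponential random graph:
`H_{n;β}(G) = n² Σ_j β_j t(H_j, G)`. -/
noncomputable def HamERG (n k : ℕ) (m : Fin k → ℕ)
    (Hs : (j : Fin k) → SimpleGraph (Fin (m j))) (β : Fin k → ℝ)
    (x : Edge n → Fin 2) : ℝ :=
  (n : ℝ) ^ 2 * ∑ j : Fin k, β j * homDensity (Hs j) (graphOf x)

/-- Partition function of the exponential random graph. -/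
noncomputable def ZERG (n k : ℕ) (m : Fin k → ℕ)
    (Hs : (j : Fin k) → SimpleGraph (Fin (m j))) (β : Fin k → ℝ) : ℝ :=
  ∑ x : Edge n → Fin 2, Real.exp (HamERG n k m Hs β x)

/-- Gibbs measure of the exponential random graph. -/
noncomputable def gibbsERG (n k : ℕ) (m : Fin k → ℕ)
    (Hs : (j : Fin k) → SimpleGraph (Fin (m j))) (β : Fin k → ℝ)
    (x : Edge n → Fin 2) : ℝ :=
  Real.exp (HamERG n k m Hs β x) / ZERG n k m Hs β

/-- Expectation under the exponential random graph measure. -/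
noncomputable def expectERG (n k : ℕ) (m : Fin k → ℕ)
    (Hs : (j : Fin k) → SimpleGraph (Fin (m j))) (β : Fin k → ℝ)
    (f : (Edge n → Fin 2) → ℝ) : ℝ :=
  ∑ x : Edge n → Fin 2, f x * gibbsERG n k m Hs β x

/-!
The weight `exp H_{n;β}` is log-supermodular on the distributive lattice `{0,1}^{E_n}`, so the
GKS inequality is the FKG inequality for the increasing functions `x_A` and `x_B`.
Log-supermodularity holds term by term: a map is a homomorphism into `G ⊓ G'` iff it is one into
both `G` and `G'`, and a homomorphism into `G` or into `G'` is one into `G ⊔ G'`, so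
`hom(H, ·)` is supermodular; when `H` has at most one edge it is even modular, which is why the
sign of `β₁` does not matter.
-/

section HomomorphismCount

variable {V W : Type*}

def homMaps (H : SimpleGraph W) (G : SimpleGraph V) : Set (W → V) :=
  {f | ∀ a b, H.Adj a b → G.Adj (f a) (f b)}

theorem homCount_eq_ncard_homMaps (H : SimpleGraph W) (G : SimpleGraph V) :
    homCount H G = (homMaps H G).ncard :=
  Nat.card_coe_set_eq _

theorem homMaps_mono (H : SimpleGraph W) {G₁ G₂ : SimpleGraph V} (h : G₁ ≤ G₂) :
    homMaps H G₁ ⊆ homMaps H G₂ :=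
  fun _ hf a b hab => h (hf a b hab)

theorem homMaps_inf (H : SimpleGraph W) (G₁ G₂ : SimpleGraph V) :
    homMaps H (G₁ ⊓ G₂) = homMaps H G₁ ∩ homMaps H G₂ := by
  ext f
  simp only [homMaps, Set.mem_ofPred_eq, Set.mem_inter_iff, SimpleGraph.inf_adj, imp_and,
    forall_and]

theorem homMaps_sup_of_subsingleton {H : SimpleGraph W} (hH : H.edgeSet.Subsingleton)
    (G₁ G₂ : SimpleGraph V) :
    homMaps H (G₁ ⊔ G₂) = homMaps H G₁ ∪ homMaps H G₂ := by
  refine (Set.union_subset (homMaps_mono H le_sup_left) (homMaps_mono H le_sup_right)).antisymm' ?_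
  intro f hf
  by_cases hedge : ∃ a b, H.Adj a b
  · obtain ⟨a, b, hab⟩ := hedge
    -- every edge of `H` is `{a, b}`, so only the image of this one edge matters
    have hcover : ∀ G : SimpleGraph V, G.Adj (f a) (f b) → f ∈ homMaps H G := by
      intro G hG c d hcd
      have hcd' : s(c, d) = s(a, b) := hH hcd hab
      rcases Sym2.eq_iff.mp hcd' with ⟨rfl, rfl⟩ | ⟨rfl, rfl⟩
      · exact hG
      · exact hG.symm
    rcases hf a b hab with h₁ | h₂
    · exact Or.inl (hcover G₁ h₁)
    · exact Or.inr (hcover G₂ h₂)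
  · push Not at hedge
    exact Or.inl fun a b hab => absurd hab (hedge a b)

variable [Finite V] [Finite W]

theorem homCount_add_homCount_le (H : SimpleGraph W) (G₁ G₂ : SimpleGraph V) :
    homCount H G₁ + homCount H G₂ ≤ homCount H (G₁ ⊓ G₂) + homCount H (G₁ ⊔ G₂) := by
  simp only [homCount_eq_ncard_homMaps, homMaps_inf]
  rw [← Set.ncard_union_add_ncard_inter _ _ (Set.toFinite _) (Set.toFinite _), add_comm]
  gcongr
  · exact Set.toFinite _
  · exact Set.union_subset (homMaps_mono H le_sup_left) (homMaps_mono H le_sup_right)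

theorem homCount_add_homCount_of_subsingleton {H : SimpleGraph W} (hH : H.edgeSet.Subsingleton)
    (G₁ G₂ : SimpleGraph V) :
    homCount H G₁ + homCount H G₂ = homCount H (G₁ ⊓ G₂) + homCount H (G₁ ⊔ G₂) := by
  simp only [homCount_eq_ncard_homMaps, homMaps_inf, homMaps_sup_of_subsingleton hH]
  rw [← Set.ncard_union_add_ncard_inter _ _ (Set.toFinite _) (Set.toFinite _), add_comm]

end HomomorphismCount

theorem SimpleGraph.edgeSet_subsingleton_of_card_le_two {W : Type*} [Fintype W]
    (H : SimpleGraph W) (hW : Fintype.card W ≤ 2) : H.edgeSet.Subsingleton := by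
  classical
  have hcard : H.edgeFinset.card ≤ 1 :=
    calc H.edgeFinset.card ≤ (⊤ : SimpleGraph W).edgeFinset.card :=
          card_le_card (SimpleGraph.edgeFinset_mono le_top)
      _ = (Fintype.card W).choose 2 := SimpleGraph.card_edgeFinset_top_eq_card_choose_two
      _ ≤ 1 := by interval_cases Fintype.card W <;> decide
  intro e he e' he'
  exact card_le_one.mp hcard e (SimpleGraph.mem_edgeFinset.mpr he) e'
    (SimpleGraph.mem_edgeFinset.mpr he')

section HomomorphismDensity

variable {m n : ℕ} (G₁ G₂ : SimpleGraph (Fin n))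

theorem homDensity_add_homDensity_le (H : SimpleGraph (Fin m)) :
    homDensity H G₁ + homDensity H G₂ ≤ homDensity H (G₁ ⊓ G₂) + homDensity H (G₁ ⊔ G₂) := by
  simp only [homDensity, ← add_div]
  exact div_le_div_of_nonneg_right (by exact_mod_cast homCount_add_homCount_le H G₁ G₂)
    (by positivity)

theorem homDensity_add_homDensity_of_subsingleton {H : SimpleGraph (Fin m)}
    (hH : H.edgeSet.Subsingleton) :
    homDensity H G₁ + homDensity H G₂ = homDensity H (G₁ ⊓ G₂) + homDensity H (G₁ ⊔ G₂) := by
  simp only [homDensity, ← add_div]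
  exact_mod_cast congrArg (fun c : ℕ => (c : ℝ) / (n : ℝ) ^ m)
    (homCount_add_homCount_of_subsingleton hH G₁ G₂)

end HomomorphismDensity

section GraphOf

variable {n : ℕ}

theorem Fin.two_inf_eq_one (a b : Fin 2) : a ⊓ b = 1 ↔ a = 1 ∧ b = 1 := by decide +revert

theorem Fin.two_sup_eq_one (a b : Fin 2) : a ⊔ b = 1 ↔ a = 1 ∨ b = 1 := by decide +revert

theorem graphOf_inf (x y : Edge n → Fin 2) : graphOf (x ⊓ y) = graphOf x ⊓ graphOf y := by
  ext a b
  simp only [graphOf, SimpleGraph.inf_adj]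
  constructor
  · rintro ⟨hab, h⟩
    obtain ⟨hx, hy⟩ := (Fin.two_inf_eq_one _ _).mp h
    exact ⟨⟨hab, hx⟩, ⟨hab, hy⟩⟩
  · rintro ⟨⟨hab, hx⟩, ⟨_, hy⟩⟩
    exact ⟨hab, (Fin.two_inf_eq_one _ _).mpr ⟨hx, hy⟩⟩

theorem graphOf_sup (x y : Edge n → Fin 2) : graphOf (x ⊔ y) = graphOf x ⊔ graphOf y := by
  ext a b
  simp only [graphOf, SimpleGraph.sup_adj, ← exists_or]
  exact exists_congr fun _ => Fin.two_sup_eq_one _ _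

end GraphOf

theorem hamERG_add_hamERG_le {n k : ℕ} {m : Fin k → ℕ}
    {Hs : (j : Fin k) → SimpleGraph (Fin (m j))} {β : Fin k → ℝ}
    (hβ : ∀ j, 0 ≤ β j ∨ (Hs j).edgeSet.Subsingleton) (x y : Edge n → Fin 2) :
    HamERG n k m Hs β x + HamERG n k m Hs β y
      ≤ HamERG n k m Hs β (x ⊓ y) + HamERG n k m Hs β (x ⊔ y) := by
  simp only [HamERG, ← mul_add, ← sum_add_distrib, graphOf_inf, graphOf_sup]
  refine mul_le_mul_of_nonneg_left (sum_le_sum fun j _ => ?_) (by positivity)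
  rcases hβ j with hβj | hsub
  · exact mul_le_mul_of_nonneg_left (homDensity_add_homDensity_le _ _ _) hβj
  · rw [homDensity_add_homDensity_of_subsingleton _ _ hsub]

theorem monotone_prod_val {ι : Type*} {N : ℕ} (s : Finset ι) :
    Monotone fun x : ι → Fin N => ∏ i ∈ s, ((x i : ℕ) : ℝ) :=
  fun _ _ hxy => prod_le_prod (fun _ _ => Nat.cast_nonneg _)
    fun i _ => Nat.cast_le.mpr (hxy i)

theorem fkg_div_sum {α : Type*} [DistribLattice α] [Fintype α] {μ f g : α → ℝ}
    (hμ₀ : 0 ≤ μ) (hf₀ : 0 ≤ f) (hg₀ : 0 ≤ g) (hf : Monotone f) (hg : Monotone g)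
    (hμ : ∀ a b, μ a * μ b ≤ μ (a ⊓ b) * μ (a ⊔ b)) :
    (∑ a, f a * (μ a / ∑ b, μ b)) * ∑ a, g a * (μ a / ∑ b, μ b)
      ≤ ∑ a, f a * g a * (μ a / ∑ b, μ b) := by
  set Z := ∑ b, μ b
  have hnormalize : ∀ h : α → ℝ, ∑ a, h a * (μ a / Z) = (∑ a, μ a * h a) / Z := fun h => by
    rw [sum_div]; exact sum_congr rfl fun a _ => by ring
  rw [hnormalize, hnormalize, hnormalize, div_mul_div_comm]
  rcases (sum_nonneg fun a _ => hμ₀ a : 0 ≤ Z).eq_or_lt with hZ | hZ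
  · simp [Z, ← hZ]
  · rw [div_le_div_iff₀ (by positivity) hZ]
    calc (∑ a, μ a * f a) * (∑ a, μ a * g a) * Z
        ≤ Z * (∑ a, μ a * (f a * g a)) * Z :=
          mul_le_mul_of_nonneg_right (fkg _ _ _ hμ₀ hf₀ hg₀ hf hg hμ) hZ.le
      _ = (∑ a, μ a * (f a * g a)) * (Z * Z) := by ring

theorem erg_gks_inequality_general (n k : ℕ) (hk : 0 < k) (m : Fin k → ℕ)
    (Hs : (j : Fin k) → SimpleGraph (Fin (m j))) (β : Fin k → ℝ)
    (hm₀ : m ⟨0, hk⟩ = 2)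
    (hβ : ∀ j : Fin k, j ≠ ⟨0, hk⟩ → 0 ≤ β j)
    (A B : Finset (Edge n)) :
    (∑ x : Edge n → Fin 2, (∏ i ∈ A, ((x i : ℕ) : ℝ)) * gibbsERG n k m Hs β x)
        * (∑ x : Edge n → Fin 2, (∏ i ∈ B, ((x i : ℕ) : ℝ)) * gibbsERG n k m Hs β x)
      ≤ ∑ x : Edge n → Fin 2,
          ((∏ i ∈ A, ((x i : ℕ) : ℝ)) * ∏ i ∈ B, ((x i : ℕ) : ℝ)) * gibbsERG n k m Hs β x := by
  have hsupermod : ∀ j, 0 ≤ β j ∨ (Hs j).edgeSet.Subsingleton := by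
    intro j
    by_cases hj : j = ⟨0, hk⟩
    · subst hj
      exact Or.inr ((Hs _).edgeSet_subsingleton_of_card_le_two (by rw [Fintype.card_fin, hm₀]))
    · exact Or.inl (hβ j hj)
  refine fkg_div_sum (fun _ => (Real.exp_pos _).le)
    (fun _ => prod_nonneg fun _ _ => Nat.cast_nonneg _)
    (fun _ => prod_nonneg fun _ _ => Nat.cast_nonneg _)
    (monotone_prod_val A) (monotone_prod_val B) fun x y => ?_
  rw [← Real.exp_add, ← Real.exp_add, Real.exp_le_exp]
  exact hamERG_add_hamERG_le hsupermod x y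

/-- if `H₁` is a single edge, `β₁ ∈ ℝ` is arbitrary and
`β₂, …, β_k ≥ 0`, the exponential random graph measure satisfies the GKS
inequality `E(x_A x_B) ≥ E(x_A) E(x_B)`. -/
theorem erg_gks_inequality (n k : ℕ) (hn : 2 ≤ n) (hk : 0 < k) (m : Fin k → ℕ)
    (Hs : (j : Fin k) → SimpleGraph (Fin (m j))) (β : Fin k → ℝ)
    (hm₀ : m ⟨0, hk⟩ = 2)
    (hH₁ : ∀ a b, (Hs ⟨0, hk⟩).Adj a b ↔ a ≠ b)
    (hβ : ∀ j : Fin k, j ≠ ⟨0, hk⟩ → 0 ≤ β j)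
    (A B : Finset (Edge n)) :
    (∑ x : Edge n → Fin 2, (∏ i ∈ A, ((x i : ℕ) : ℝ)) * gibbsERG n k m Hs β x)
        * (∑ x : Edge n → Fin 2, (∏ i ∈ B, ((x i : ℕ) : ℝ)) * gibbsERG n k m Hs β x)
      ≤ ∑ x : Edge n → Fin 2,
          ((∏ i ∈ A, ((x i : ℕ) : ℝ)) * ∏ i ∈ B, ((x i : ℕ) : ℝ)) * gibbsERG n k m Hs β x :=
  erg_gks_inequality_general n k hk m Hs β hm₀ hβ A B
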